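/- arXiv:2504.18641 — 4 statements merged into one kernel-verified Lean document; each statement's English description precedes it below -/
import Mathlib

section
/- Every continuous homomorphism from ℝ^n × (ℝ/ℤ)^m to a torus (ℝ/ℤ)^c which is trivial on the torus factor {0} × (ℝ/ℤ)^m lies in the path-component of the trivial homomorphism in Hom(A,C) with the compact-open topology. -/
/-- Every continuous homomorphism from `A = ℝ^n × (ℝ/ℤ)^m` to the torus `C = (ℝ/ℤ)^c`
which is trivial on the torus factor `{0} × (ℝ/ℤ)^m` lies in the path-component of the
trivial homomorphism in `Hom(A,C)` with the compact-open topology. -/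
theorem hom_trivial_on_torus_mem_pathComponent_zero (n m c : ℕ)
    (f : ContinuousAddMonoidHom
      ((Fin n → ℝ) × (Fin m → AddCircle (1 : ℝ))) (Fin c → AddCircle (1 : ℝ)))
    (hf : ∀ t : Fin m → AddCircle (1 : ℝ), f (0, t) = 0) :
    f ∈ pathComponent (0 : ContinuousAddMonoidHom
      ((Fin n → ℝ) × (Fin m → AddCircle (1 : ℝ))) (Fin c → AddCircle (1 : ℝ))) := by
  have key : ∀ x t, f (x, t) = f (x, 0) := by
    intro x t
    have : f (x, t) = f (x, 0) + f (0, t) := by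
      rw [← map_add]; norm_num
    rw [this, hf, add_zero]
  set G : unitInterval → ContinuousAddMonoidHom
      ((Fin n → ℝ) × (Fin m → AddCircle (1 : ℝ))) (Fin c → AddCircle (1 : ℝ)) :=
    fun s =>
      { toFun := fun p => f ((s : ℝ) • p.1, 0)
        map_zero' := by simp [hf]
        map_add' := by
          intro p q
          simp only [Prod.fst_add, smul_add]
          rw [show ((s:ℝ) • p.1 + (s:ℝ) • q.1, (0 : Fin m → AddCircle (1:ℝ)))
              = ((s:ℝ) • p.1, 0) + ((s:ℝ) • q.1, 0) by simp [Prod.ext_iff], map_add]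
        continuous_toFun := f.continuous.comp <| by fun_prop } with hG
  have hcont : Continuous G := by
    apply ContinuousAddMonoidHom.continuous_of_continuous_uncurry
    exact f.continuous.comp <| by fun_prop
  refine ⟨⟨⟨fun s => G s, hcont⟩, ?_, ?_⟩⟩
  · refine DFunLike.ext _ _ fun p => ?_
    show f ((((0 : unitInterval) : ℝ)) • p.1, 0) = 0
    simp [hf]
  · refine DFunLike.ext _ _ fun p => ?_
    show f ((((1 : unitInterval) : ℝ)) • p.1, 0) = f p
    rw [Set.Icc.coe_one, one_smul, ← key]
end

section
/- Let A be a closed abelian Lie subgroup of a simply connected Lie group, Λ a discrete subgroup of A, and B the smallest closed subgroup of A containing Λ such that A/B is a vector group (isomorphic to ℝ^k). Then B/Λ is compact. -/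
/-- A topological additive group is a vector group if it is topologically isomorphic to
some `ℝ^k`. -/
def IsVectorGroup (X : Type*) [AddGroup X] [TopologicalSpace X] : Prop :=
  ∃ (k : ℕ) (e : X ≃+ (Fin k → ℝ)), Continuous e ∧ Continuous e.symm

open Submodule Set

/-- If `S` is an additive subgroup of a finite-dimensional real normed space, then there is a
compact set `K` such that every element of the real span of `S` is `k + s` with `k ∈ K`, `s ∈ S`. -/
lemma aux_exists_compact_cover {E : Type*} [NormedAddCommGroup E] [NormedSpace ℝ E]
    [FiniteDimensional ℝ E] (S : AddSubgroup E) :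
    ∃ K : Set E, IsCompact K ∧
      ∀ x ∈ Submodule.span ℝ (S : Set E), ∃ k ∈ K, ∃ s ∈ S, x = k + s := by
  obtain ⟨b, hbS, hbspan, hbli⟩ := exists_linearIndependent ℝ (S : Set E)
  have hfin : b.Finite := hbli.setFinite
  classical
  set u : Finset E := hfin.toFinset with hu
  have hub : (u : Set E) = b := hfin.coe_toFinset
  set g : ({x // x ∈ u} → ℝ) → E := fun f => ∑ i : {x // x ∈ u}, f i • (i : E) with hg
  have hgc : Continuous g := by
    apply continuous_finset_sum
    intro i _
    exact (continuous_apply i).smul continuous_const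
  refine ⟨g '' Set.Icc 0 1, (isCompact_Icc).image hgc, ?_⟩
  intro x hx
  have hxu : x ∈ span ℝ (u : Set E) := by
    rw [hub, hbspan]; exact hx
  obtain ⟨f, hf⟩ := mem_span_finset.mp hxu
  refine ⟨g (fun i => Int.fract (f i)), ⟨_, ⟨fun i => Int.fract_nonneg _,
      fun i => (Int.fract_lt_one _).le⟩, rfl⟩, ∑ i ∈ u, ⌊f i⌋ • i, ?_, ?_⟩
  · exact sum_mem fun i hi => AddSubgroup.zsmul_mem S (hbS (hub ▸ hi)) _
  · rw [← hf.2]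
    have hgk : g (fun i => Int.fract (f ↑i)) = ∑ i ∈ u, Int.fract (f i) • i :=
      Finset.sum_coe_sort u (fun i => Int.fract (f i) • i)
    rw [hgk, ← Finset.sum_add_distrib]
    refine Finset.sum_congr rfl fun i _ => ?_
    rw [← Int.cast_smul_eq_zsmul ℝ, ← add_smul, Int.fract_add_floor]

/-- Let `A = ℝ^n × (ℝ/ℤ)^m` be a (closed) connected abelian Lie group, `Λ` a discrete
subgroup of `A`, and `B` the smallest closed subgroup of `A` containing `Λ` such that
`A/B` is a vector group. Then `B/Λ` is compact. -/
theorem quotient_compact_of_smallest_vector_quotient (n m : ℕ)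
    (Λ B : AddSubgroup ((Fin n → ℝ) × (Fin m → AddCircle (1 : ℝ))))
    (hΛ : DiscreteTopology Λ)
    (hBclosed : IsClosed (B : Set ((Fin n → ℝ) × (Fin m → AddCircle (1 : ℝ)))))
    (hΛB : Λ ≤ B)
    (hBvec : IsVectorGroup (((Fin n → ℝ) × (Fin m → AddCircle (1 : ℝ))) ⧸ B))
    (hBmin : ∀ B' : AddSubgroup ((Fin n → ℝ) × (Fin m → AddCircle (1 : ℝ))),
      IsClosed (B' : Set ((Fin n → ℝ) × (Fin m → AddCircle (1 : ℝ)))) → Λ ≤ B' →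
      IsVectorGroup (((Fin n → ℝ) × (Fin m → AddCircle (1 : ℝ))) ⧸ B') → B ≤ B') :
    CompactSpace (B ⧸ Λ.addSubgroupOf B) := by
  haveI : Fact ((0:ℝ) < 1) := ⟨zero_lt_one⟩
  classical
  set E := Fin n → ℝ
  set T := Fin m → AddCircle (1 : ℝ)
  -- the projection of Λ to the vector part
  set S : AddSubgroup E := Λ.map (AddMonoidHom.fst E T) with hS
  set V₀ : Submodule ℝ E := Submodule.span ℝ (S : Set E) with hV₀
  obtain ⟨W, hW⟩ := V₀.exists_isCompl
  set p : E →ₗ[ℝ] W := W.linearProjOfIsCompl V₀ hW.symm with hp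
  have hpker : LinearMap.ker p = V₀ := Submodule.linearProjOfIsCompl_ker hW.symm
  set φ : (E × T) →+ W := p.toAddMonoidHom.comp (AddMonoidHom.fst E T) with hφ
  have hmem : ∀ a : E × T, a ∈ φ.ker ↔ a.1 ∈ V₀ := by
    intro a
    rw [AddMonoidHom.mem_ker]
    change p a.1 = 0 ↔ _
    rw [← LinearMap.mem_ker, hpker]
  have hpc : Continuous p := p.continuous_of_finiteDimensional
  have hφc : Continuous φ := hpc.comp continuous_fst
  -- B₀ is closed
  have hB₀closed : IsClosed ((φ.ker : AddSubgroup (E × T)) : Set (E × T)) := by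
    have : ((φ.ker : AddSubgroup (E × T)) : Set (E × T)) = φ ⁻¹' {0} := by
      ext a; simp [AddMonoidHom.mem_ker]
    rw [this]
    exact isClosed_singleton.preimage hφc
  -- Λ ≤ B₀
  have hΛB₀ : Λ ≤ φ.ker := by
    intro l hl
    rw [hmem]
    exact Submodule.subset_span (AddSubgroup.mem_map.mpr ⟨l, hl, rfl⟩)
  -- A / B₀ is a vector group
  have hsurj : Function.Surjective φ := by
    intro w
    refine ⟨((w : E), 0), ?_⟩
    change p (w : E) = w
    exact Submodule.linearProjOfIsCompl_apply_left hW.symm w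
  have hB₀vec : IsVectorGroup ((E × T) ⧸ φ.ker) := by
    set e₁ : ((E × T) ⧸ φ.ker) ≃+ W := QuotientAddGroup.quotientKerEquivOfSurjective φ hsurj
      with he₁
    have he₁mk : ∀ a : E × T, e₁ (QuotientAddGroup.mk a) = φ a := fun a => rfl
    have he₁c : Continuous e₁ := by
      rw [(QuotientAddGroup.isQuotientMap_mk φ.ker).continuous_iff]
      exact hφc
    have he₁s : Continuous e₁.symm := by
      have : (e₁.symm : W → (E × T) ⧸ φ.ker)
          = fun (w : W) => (QuotientAddGroup.mk (((w : E), (0 : T)) : E × T) : (E × T) ⧸ φ.ker) := by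
        funext w
        apply e₁.injective
        rw [AddEquiv.apply_symm_apply, he₁mk]
        exact (Submodule.linearProjOfIsCompl_apply_left hW.symm w).symm
      rw [this]
      exact QuotientAddGroup.continuous_mk.comp
        ((continuous_subtype_val).prodMk continuous_const)
    set e₂ : W ≃ₗ[ℝ] (Fin (Module.finrank ℝ W) → ℝ) := (Module.finBasis ℝ W).equivFun with he₂
    refine ⟨Module.finrank ℝ W, e₁.trans e₂.toAddEquiv, ?_, ?_⟩
    · exact (e₂.toLinearMap.continuous_of_finiteDimensional).comp he₁c
    · exact he₁s.comp (e₂.symm.toLinearMap.continuous_of_finiteDimensional)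
  have hBB₀ : B ≤ φ.ker := hBmin _ hB₀closed hΛB₀ hB₀vec
  -- the covering compact set
  obtain ⟨K₁, hK₁c, hK₁⟩ := aux_exists_compact_cover S
  set K : Set (E × T) := (K₁ ×ˢ (Set.univ : Set T)) ∩ (B : Set (E × T)) with hK
  have hKc : IsCompact K := (hK₁c.prod isCompact_univ).inter_right hBclosed
  set sK : Set B := Subtype.val ⁻¹' K with hsK
  have hsKc : IsCompact sK :=
    hBclosed.isClosedEmbedding_subtypeVal.isCompact_preimage hKc
  constructor
  have hcover : (Set.univ : Set (B ⧸ Λ.addSubgroupOf B))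
      = QuotientAddGroup.mk '' sK := by
    refine (Set.eq_univ_of_univ_subset ?_).symm
    intro q _
    obtain ⟨b, rfl⟩ := QuotientAddGroup.mk_surjective q
    have hb1 : (b : E × T).1 ∈ V₀ := (hmem _).mp (hBB₀ b.2)
    obtain ⟨k, hk, s, hs, hbks⟩ := hK₁ _ hb1
    obtain ⟨l, hl, rfl⟩ := AddSubgroup.mem_map.mp hs
    have hlB : l ∈ B := hΛB hl
    refine ⟨b - ⟨l, hlB⟩, ?_, ?_⟩
    · refine ⟨⟨?_, trivial⟩, (b - ⟨l, hlB⟩).2⟩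
      show ((b : E × T) - l).1 ∈ K₁
      have : ((b : E × T) - l).1 = k := by
        simp only [Prod.fst_sub, hbks, AddMonoidHom.coe_fst]
        exact add_sub_cancel_right _ _
      rw [this]; exact hk
    · rw [QuotientAddGroup.eq]
      have : -(b - ⟨l, hlB⟩) + b = ⟨l, hlB⟩ := by abel
      rw [this]
      exact hl
  rw [hcover]
  exact hsKc.image QuotientAddGroup.continuous_mk
end

section
/- Let A = ℝ^n × (ℝ/ℤ)^m be a connected abelian Lie group and Λ a discrete subgroup of A. There exists a smallest closed subgroup B of A containing Λ with A/B a vector group, and B/Λ is compact. -/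
namespace VGQ

noncomputable section

open Submodule Function

abbrev Amb (n m : ℕ) := (Fin n → ℝ) × (Fin m → AddCircle (1 : ℝ))
abbrev Cov (n m : ℕ) := (Fin n → ℝ) × (Fin m → ℝ)

variable (n m : ℕ)

/-- The covering homomorphism `ℝ^n × ℝ^m → ℝ^n × (ℝ/ℤ)^m`. -/
def proj : Cov n m →+ Amb n m where
  toFun v := (v.1, fun i => (v.2 i : AddCircle (1 : ℝ)))
  map_zero' := by ext i <;> simp
  map_add' a b := by ext i <;> simp [AddCircle.coe_add]

lemma proj_cont : Continuous (proj n m) := by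
  refine continuous_fst.prodMk (continuous_pi fun i => ?_)
  exact (AddCircle.continuous_mk' (1 : ℝ)).comp ((continuous_apply i).comp continuous_snd)

lemma coe_surj : Function.Surjective ((↑·) : ℝ → AddCircle (1 : ℝ)) :=
  QuotientAddGroup.mk'_surjective _

lemma proj_surj : Function.Surjective (proj n m) := by
  rintro ⟨x, t⟩
  choose y hy using fun i => coe_surj (t i)
  exact ⟨(x, y), by ext i <;> simp [proj, hy]⟩

variable (Λ : AddSubgroup (Amb n m))

/-- The linear span of the first components of `Λ`. -/
def Wsub : Submodule ℝ (Fin n → ℝ) := span ℝ (Prod.fst '' (Λ : Set (Amb n m)))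

/-- The candidate subgroup `B = W × T^m`. -/
def Bgrp : AddSubgroup (Amb n m) := (Wsub n m Λ).toAddSubgroup.prod ⊤

lemma mem_Bgrp {a : Amb n m} : a ∈ Bgrp n m Λ ↔ a.1 ∈ Wsub n m Λ := by
  simp [Bgrp, AddSubgroup.mem_prod]

lemma isClosed_Bgrp : IsClosed ((Bgrp n m Λ : Set (Amb n m))) := by
  have : (Bgrp n m Λ : Set (Amb n m)) = (Wsub n m Λ : Set (Fin n → ℝ)) ×ˢ Set.univ := by
    ext a; simp [mem_Bgrp, Set.mem_prod]
  rw [this]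
  exact ((Wsub n m Λ).closed_of_finiteDimensional).prod isClosed_univ

lemma le_Bgrp : Λ ≤ Bgrp n m Λ := by
  intro a ha
  exact (mem_Bgrp n m Λ).2 (subset_span ⟨a, ha, rfl⟩)

lemma isVectorGroup_quot : IsVectorGroup (Amb n m ⧸ Bgrp n m Λ) := by
  classical
  set W := Wsub n m Λ with hW
  set k := Module.finrank ℝ ((Fin n → ℝ) ⧸ W) with hk
  let bq : Module.Basis (Fin k) ℝ ((Fin n → ℝ) ⧸ W) := Module.finBasis ℝ _
  let g : (Fin n → ℝ) →ₗ[ℝ] (Fin k → ℝ) := bq.equivFun.toLinearMap ∘ₗ W.mkQ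
  have hgker : LinearMap.ker g = W := by
    rw [LinearMap.ker_comp, LinearEquiv.ker, Submodule.comap_bot, Submodule.ker_mkQ]
  have hgsurj : Surjective g := bq.equivFun.surjective.comp (Submodule.mkQ_surjective W)
  obtain ⟨w, hw⟩ := g.exists_rightInverse_of_surjective (LinearMap.range_eq_top.2 hgsurj)
  -- the additive hom `A → ℝ^k` with kernel `B`
  let F : Amb n m →+ (Fin k → ℝ) := g.toAddMonoidHom.comp (AddMonoidHom.fst _ _)
  have hFB : ∀ a : Amb n m, a ∈ Bgrp n m Λ → F a = 0 := by
    intro a ha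
    have : a.1 ∈ W := (mem_Bgrp n m Λ).1 ha
    simpa [F, ← hgker, LinearMap.mem_ker] using this
  let L : (Amb n m ⧸ Bgrp n m Λ) →+ (Fin k → ℝ) := QuotientAddGroup.lift _ F hFB
  let s : (Fin k → ℝ) → Amb n m := fun y => (w y, 0)
  have hs : ∀ y, F (s y) = y := by
    intro y
    have : g (w y) = y := by
      have := LinearMap.congr_fun hw y
      simpa using this
    simpa [F, s] using this
  have hleft : Function.LeftInverse (fun y => (QuotientAddGroup.mk (s y) : Amb n m ⧸ Bgrp n m Λ))
      L := by
    intro q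
    induction q using QuotientAddGroup.induction_on with
    | H a =>
      show (QuotientAddGroup.mk (s (L (QuotientAddGroup.mk a))) : Amb n m ⧸ Bgrp n m Λ) = _
      rw [show L (QuotientAddGroup.mk a) = F a from QuotientAddGroup.lift_mk _ hFB a]
      rw [QuotientAddGroup.eq]
      refine (mem_Bgrp n m Λ).2 ?_
      have h1 : g ((-(s (F a)) + a).1) = 0 := by
        have hgw : g (w (g a.1)) = g a.1 := by
          have := LinearMap.congr_fun hw (g a.1); simpa using this
        simp [s, F, hgw]
      rw [← hW, ← hgker]
      exact h1
  have hright : Function.RightInverse (fun y => (QuotientAddGroup.mk (s y) : Amb n m ⧸ Bgrp n m Λ))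
      L := by
    intro y
    show L (QuotientAddGroup.mk (s y)) = y
    rw [show L (QuotientAddGroup.mk (s y)) = F (s y) from QuotientAddGroup.lift_mk _ hFB (s y)]
    exact hs y
  let E : (Amb n m ⧸ Bgrp n m Λ) ≃+ (Fin k → ℝ) :=
    { toFun := L, invFun := fun y => QuotientAddGroup.mk (s y),
      left_inv := hleft, right_inv := hright, map_add' := map_add L }
  refine ⟨k, E, ?_, ?_⟩
  · rw [(QuotientAddGroup.isQuotientMap_mk (Bgrp n m Λ)).continuous_iff]
    have : ⇑E ∘ QuotientAddGroup.mk = ⇑F := by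
      funext a; exact QuotientAddGroup.lift_mk _ hFB a
    show Continuous (⇑E ∘ QuotientAddGroup.mk)
    rw [this]
    exact (g.continuous_of_finiteDimensional).comp continuous_fst
  · show Continuous fun y => (QuotientAddGroup.mk (s y) : Amb n m ⧸ Bgrp n m Λ)
    exact QuotientAddGroup.continuous_mk.comp
      ((w.continuous_of_finiteDimensional).prodMk continuous_const)

/-- A continuous additive hom from the torus to `ℝ^k` is trivial. -/
lemma torus_hom_trivial {k : ℕ} (c : (Fin m → AddCircle (1 : ℝ)) →+ (Fin k → ℝ))
    (hc : Continuous c) : ∀ t, c t = 0 := by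
  haveI : Fact ((0 : ℝ) < 1) := ⟨one_pos⟩
  have hcomp : IsCompact (Set.range c) := isCompact_range hc
  obtain ⟨M, hM⟩ := hcomp.isBounded.exists_norm_le
  intro t
  have key : ∀ N : ℕ, (N : ℝ) * ‖c t‖ ≤ M := by
    intro N
    have h1 : c (N • t) = N • c t := map_nsmul c N t
    have h2 : ‖c (N • t)‖ ≤ M := hM _ ⟨N • t, rfl⟩
    rw [h1] at h2
    rwa [← Nat.cast_smul_eq_nsmul ℝ, norm_smul, Real.norm_natCast] at h2
  by_contra h
  have hpos : 0 < ‖c t‖ := norm_pos_iff.2 h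
  obtain ⟨N, hN⟩ := exists_nat_gt (M / ‖c t‖)
  have := key N
  rw [← le_div_iff₀ hpos] at this
  linarith

lemma Bgrp_min (B' : AddSubgroup (Amb n m)) (hle : Λ ≤ B')
    (hvg : IsVectorGroup (Amb n m ⧸ B')) : Bgrp n m Λ ≤ B' := by
  obtain ⟨k, e, he, -⟩ := hvg
  let f : Amb n m →+ (Fin k → ℝ) := e.toAddMonoidHom.comp (QuotientAddGroup.mk' B')
  have hf : Continuous f := he.comp QuotientAddGroup.continuous_mk
  have hmem : ∀ a : Amb n m, f a = 0 ↔ a ∈ B' := by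
    intro a
    have : f a = e (QuotientAddGroup.mk a) := rfl
    rw [this, AddEquiv.map_eq_zero_iff, QuotientAddGroup.eq_zero_iff]
  have h2 : ∀ t : Fin m → AddCircle (1 : ℝ), f (0, t) = 0 := by
    have := torus_hom_trivial m (c := f.comp (AddMonoidHom.inr _ _))
      (hf.comp (continuous_const.prodMk continuous_id))
    intro t; exact this t
  let φ := (f.comp (AddMonoidHom.inl (Fin n → ℝ) _)).toRealLinearMap
    (hf.comp (continuous_id.prodMk continuous_const))
  have hφspan : Wsub n m Λ ≤ LinearMap.ker (φ : (Fin n → ℝ) →ₗ[ℝ] (Fin k → ℝ)) := by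
    rw [Wsub, span_le]
    rintro x ⟨a, ha, rfl⟩
    have hfa : f a = 0 := (hmem a).2 (hle ha)
    have hsplit : f a = f (a.1, 0) + f (0, a.2) := by
      rw [← map_add]; congr 1; exact Prod.ext (by simp) (by simp)
    have : f (a.1, 0) = 0 := by
      rw [hsplit, h2 a.2, add_zero] at hfa; exact hfa
    simpa [φ, LinearMap.mem_ker, AddMonoidHom.coe_toRealLinearMap] using this
  intro a ha
  rw [← hmem]
  have h1 : a.1 ∈ Wsub n m Λ := (mem_Bgrp n m Λ).1 ha
  have hφ1 : f (a.1, 0) = 0 := by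
    have := hφspan h1
    simpa [φ, LinearMap.mem_ker, AddMonoidHom.coe_toRealLinearMap] using this
  have hsplit : f a = f (a.1, 0) + f (0, a.2) := by
    rw [← map_add]; congr 1; exact Prod.ext (by simp) (by simp)
  rw [hsplit, hφ1, h2, add_zero]


set_option maxHeartbeats 1000000 in
lemma compact_quot (hdisc : DiscreteTopology Λ) :
    CompactSpace ((Bgrp n m Λ) ⧸ Λ.addSubgroupOf (Bgrp n m Λ)) := by
  classical
  set Γ : AddSubgroup (Cov n m) := Λ.comap (proj n m) with hΓ
  -- isolated zero in Λ
  have hΛ0 : IsOpen ({0} : Set Λ) := isOpen_discrete _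
  rw [isOpen_induced_iff] at hΛ0
  obtain ⟨U, hUopen, hU⟩ := hΛ0
  have hU0 : (0 : Amb n m) ∈ U := by
    have : (0 : Λ) ∈ Subtype.val ⁻¹' U := by rw [hU]; rfl
    exact this
  have hUΛ : ∀ a ∈ Λ, a ∈ U → a = 0 := by
    intro a ha haU
    have : (⟨a, ha⟩ : Λ) ∈ Subtype.val ⁻¹' U := haU
    rw [hU] at this
    exact congrArg Subtype.val this
  set O : Set (Cov n m) := Metric.ball 0 (1/2) ∩ (proj n m) ⁻¹' U with hO
  have hOopen : IsOpen O := (Metric.isOpen_ball).inter (hUopen.preimage (proj_cont n m))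
  have hO0 : (0 : Cov n m) ∈ O := ⟨by simp, by simpa [map_zero] using hU0⟩
  have hOΓ : ∀ v ∈ Γ, v ∈ O → v = 0 := by
    rintro v hv ⟨hball, hpre⟩
    have hzero : proj n m v = 0 := hUΛ _ hv hpre
    have h1 : v.1 = 0 := congrArg Prod.fst hzero
    have h2 : v.2 = 0 := by
      funext i
      have hc : ((v.2 i : AddCircle (1 : ℝ))) = 0 := congrFun (congrArg Prod.snd hzero) i
      obtain ⟨z, hz⟩ := (AddCircle.coe_eq_zero_iff _).1 hc
      have hzv : (z : ℝ) = v.2 i := by simpa using hz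
      have hlt : |v.2 i| < 1/2 := by
        have hn : ‖v‖ < 1/2 := by simpa [dist_zero_right] using hball
        have hle2 : ‖v.2 i‖ ≤ ‖v‖ := le_trans (norm_le_pi_norm v.2 i) (norm_snd_le v)
        exact lt_of_le_of_lt hle2 hn
      rw [← hzv] at hlt
      have hz0 : z = 0 := by
        by_contra hne
        have h1z : (1 : ℤ) ≤ |z| := Int.one_le_abs hne
        have : (1 : ℝ) ≤ |(z : ℝ)| := by exact_mod_cast (by push_cast [← Int.cast_abs]; exact_mod_cast h1z : (1:ℝ) ≤ ((|z| : ℤ) : ℝ))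
        linarith
      rw [← hzv, hz0]; simp
    exact Prod.ext h1 h2
  have hΓdisc : DiscreteTopology Γ := by
    rw [discreteTopology_iff_isOpen_singleton_zero, isOpen_induced_iff]
    refine ⟨O, hOopen, ?_⟩
    ext x
    simp only [Set.mem_preimage, Set.mem_singleton_iff]
    constructor
    · intro hx; exact Subtype.ext (hOΓ _ x.2 hx)
    · rintro rfl; exact hO0
  -- the real span of Γ
  set V : Submodule ℝ (Cov n m) := span ℝ (Γ : Set (Cov n m)) with hV
  have hV1 : ∀ v ∈ V, v.1 ∈ Wsub n m Λ := by
    have hle : V ≤ (Wsub n m Λ).comap (LinearMap.fst ℝ _ _) := by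
      rw [hV, span_le]
      intro x hx
      exact subset_span ⟨proj n m x, hx, rfl⟩
    exact fun v hv => hle hv
  have hsingle : ∀ i : Fin m, ((0, Pi.single i (1 : ℝ)) : Cov n m) ∈ Γ := by
    intro i
    show proj n m (0, Pi.single i 1) ∈ Λ
    have heq : proj n m (0, Pi.single i 1) = 0 := by
      refine Prod.ext rfl (funext fun j => ?_)
      have key : (((Pi.single i (1 : ℝ) : Fin m → ℝ) j : ℝ) : AddCircle (1 : ℝ)) = 0 := by
        by_cases h : j = i
        · subst h; rw [Pi.single_eq_same]; exact AddCircle.coe_period 1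
        · rw [Pi.single_eq_of_ne h]
          exact (AddCircle.coe_eq_zero_iff _).2 ⟨0, by simp⟩
      exact key
    rw [heq]; exact zero_mem Λ
  have hsnd : ∀ y : Fin m → ℝ, ((0, y) : Cov n m) ∈ V := by
    intro y
    have h1 : y = ∑ i, y i • (Pi.single i (1 : ℝ) : Fin m → ℝ) := by
      funext j
      simp [Finset.sum_apply, Pi.single_apply, Finset.sum_ite_eq]
    have heq : ((0, y) : Cov n m) = ∑ i, y i • ((0, Pi.single i (1 : ℝ)) : Cov n m) := by
      refine Prod.ext ?_ ?_
      · rw [Prod.fst_sum]; simp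
      · rw [Prod.snd_sum]; simpa using h1
    rw [heq]
    exact Submodule.sum_mem _ fun i _ => Submodule.smul_mem _ _ (subset_span (hsingle i))
  have hfst : ∀ x ∈ Wsub n m Λ, ((x, 0) : Cov n m) ∈ V := by
    have hle2 : Wsub n m Λ ≤ V.comap (LinearMap.inl ℝ _ _) := by
      rw [Wsub, span_le]
      rintro _ ⟨a, ha, rfl⟩
      choose y hy using fun i => coe_surj (a.2 i)
      have hvΓ : ((a.1, y) : Cov n m) ∈ Γ := by
        show proj n m (a.1, y) ∈ Λ
        have : proj n m (a.1, y) = a := Prod.ext rfl (funext hy)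
        rw [this]; exact ha
      have hsub := Submodule.sub_mem V (subset_span hvΓ) (hsnd y)
      have heq : ((a.1, y) : Cov n m) - (0, y) = (a.1, 0) := by
        refine Prod.ext (by simp) (by simp)
      rw [heq] at hsub
      simpa [Submodule.mem_comap] using hsub
    exact fun x hx => hle2 hx
  have himage : ∀ b ∈ Bgrp n m Λ, ∃ v ∈ V, proj n m v = b := by
    intro b hb
    choose y hy using fun i => coe_surj (b.2 i)
    refine ⟨(b.1, y), ?_, Prod.ext rfl (funext hy)⟩
    have := Submodule.add_mem V (hfst b.1 ((mem_Bgrp n m Λ).1 hb)) (hsnd y)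
    simpa using this
  -- the lattice inside V
  let Γᵥ : AddSubgroup V := Γ.comap (V.subtype.toAddMonoidHom)
  let Lz : Submodule ℤ V := AddSubgroup.toIntSubmodule Γᵥ
  haveI hLdisc : DiscreteTopology Lz := by
    refine DiscreteTopology.of_continuous_injective
      (f := fun x : Lz => (⟨x.1.1, x.2⟩ : Γ)) ?_ ?_
    · exact Continuous.subtype_mk (continuous_subtype_val.comp continuous_subtype_val) _
    · intro x y hxy
      have hval : (x.1 : Cov n m) = (y.1 : Cov n m) :=
        congrArg (fun g : ↥Γ => (g : Cov n m)) hxy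
      exact Subtype.ext (Subtype.ext hval)
  have hspanL : span ℝ (Lz : Set V) = ⊤ := by
    apply Submodule.map_injective_of_injective (Submodule.injective_subtype V)
    rw [Submodule.map_span, Submodule.map_top, Submodule.range_subtype]
    have himg : V.subtype '' (Lz : Set V) = (Γ : Set (Cov n m)) := by
      ext x
      constructor
      · rintro ⟨y, hy, rfl⟩; exact hy
      · intro hx; exact ⟨⟨x, subset_span hx⟩, hx, rfl⟩
    rw [himg]
  haveI : IsZLattice ℝ Lz := ⟨hspanL⟩
  let bz := Module.Free.chooseBasis ℤ Lz
  let bV := bz.ofZLatticeBasis ℝ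
  set D := ZSpan.fundamentalDomain bV with hD
  have hDbdd : Bornology.IsBounded D := ZSpan.fundamentalDomain_isBounded bV
  have hKcomp : IsCompact (closure D) := hDbdd.isCompact_closure
  let ρ : ↥V →+ ↥(Bgrp n m Λ) :=
    AddMonoidHom.codRestrict ((proj n m).comp (V.subtype.toAddMonoidHom)) _
      (fun v => (mem_Bgrp n m Λ).2 (hV1 v.1 v.2))
  have hρcont : Continuous ρ :=
    Continuous.subtype_mk ((proj_cont n m).comp continuous_subtype_val) _
  have hsurj : ∀ q : (Bgrp n m Λ) ⧸ Λ.addSubgroupOf (Bgrp n m Λ),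
      ∃ x ∈ closure D, (QuotientAddGroup.mk (ρ x) : (Bgrp n m Λ) ⧸ Λ.addSubgroupOf (Bgrp n m Λ)) = q := by
    intro q
    obtain ⟨b, rfl⟩ := QuotientAddGroup.mk_surjective q
    obtain ⟨v, hvV, hv⟩ := himage b.1 b.2
    obtain ⟨g, hg, -⟩ := ZSpan.exist_unique_vadd_mem_fundamentalDomain bV (⟨v, hvV⟩ : ↥V)
    have hgL : (g : ↥V) ∈ Lz := (bz.ofZLatticeBasis_span ℝ).le g.2
    have hvadd : g +ᵥ (⟨v, hvV⟩ : ↥V) = (g : ↥V) + ⟨v, hvV⟩ := rfl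
    rw [hvadd] at hg
    refine ⟨(g : ↥V) + ⟨v, hvV⟩, ?_, ?_⟩
    · exact subset_closure hg
    have hρv : ρ ⟨v, hvV⟩ = b := Subtype.ext hv
    rw [map_add, hρv, QuotientAddGroup.eq]
    have habel : -(ρ (g : ↥V) + b) + b = -(ρ (g : ↥V)) := by abel
    rw [habel]
    refine neg_mem ?_
    rw [AddSubgroup.mem_addSubgroupOf]
    exact hgL
  constructor
  have huniv : (Set.univ : Set ((Bgrp n m Λ) ⧸ Λ.addSubgroupOf (Bgrp n m Λ)))
      = QuotientAddGroup.mk '' (ρ '' closure D) := by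
    ext q
    simp only [Set.mem_univ, true_iff]
    obtain ⟨x, hx, hq⟩ := hsurj q
    exact ⟨ρ x, ⟨x, hx, rfl⟩, hq⟩
  rw [huniv]
  exact (hKcomp.image hρcont).image QuotientAddGroup.continuous_mk

end

end VGQ

/-- Let `A = ℝ^n × (ℝ/ℤ)^m` be a connected abelian Lie group and `Λ` a discrete subgroup
of `A`. There exists a smallest closed subgroup `B` of `A` containing `Λ` with `A/B` a
vector group, and `B/Λ` is compact. -/
theorem exists_smallest_vector_quotient (n m : ℕ)
    (Λ : AddSubgroup ((Fin n → ℝ) × (Fin m → AddCircle (1 : ℝ))))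
    (hΛ : DiscreteTopology Λ) :
    ∃ B : AddSubgroup ((Fin n → ℝ) × (Fin m → AddCircle (1 : ℝ))),
      IsClosed (B : Set ((Fin n → ℝ) × (Fin m → AddCircle (1 : ℝ)))) ∧ Λ ≤ B ∧
      IsVectorGroup (((Fin n → ℝ) × (Fin m → AddCircle (1 : ℝ))) ⧸ B) ∧
      (∀ B' : AddSubgroup ((Fin n → ℝ) × (Fin m → AddCircle (1 : ℝ))),
        IsClosed (B' : Set ((Fin n → ℝ) × (Fin m → AddCircle (1 : ℝ)))) → Λ ≤ B' →
        IsVectorGroup (((Fin n → ℝ) × (Fin m → AddCircle (1 : ℝ))) ⧸ B') → B ≤ B') ∧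
      CompactSpace (B ⧸ Λ.addSubgroupOf B) := by
  refine ⟨VGQ.Bgrp n m Λ, VGQ.isClosed_Bgrp n m Λ, VGQ.le_Bgrp n m Λ,
    VGQ.isVectorGroup_quot n m Λ, fun B' _ hle hvg => VGQ.Bgrp_min n m Λ B' hle hvg,
    VGQ.compact_quot n m Λ hΛ⟩
end

section
/- Let G be a connected Lie group with center Z and C the maximal torus of Z. If the group of restrictions to C of automorphisms of G is infinite, then Aut(G) has infinitely many connected components. -/
open scoped Manifold

/-- The group of continuous automorphisms of a topological group, topologized via the
compact-open topology on the automorphism and its inverse. -/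
def ContAut (G : Type*) [Group G] [TopologicalSpace G] :=
  {α : G ≃* G // Continuous α ∧ Continuous α.symm}

instance (G : Type*) [Group G] [TopologicalSpace G] : TopologicalSpace (ContAut G) :=
  TopologicalSpace.induced
    (fun α : ContAut G => ((⟨α.1, α.2.1⟩ : C(G, G)), (⟨α.1.symm, α.2.2⟩ : C(G, G))))
    inferInstance

/-- A (finite-dimensional real) Lie group has no small subgroups. -/
theorem exists_nss_subgroup
    {E : Type*} [NormedAddCommGroup E] [NormedSpace ℝ E] [FiniteDimensional ℝ E]
    {G : Type*} [TopologicalSpace G] [ChartedSpace E G] [Group G] [IsTopologicalGroup G]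
    [LieGroup 𝓘(ℝ, E) (⊤ : ℕ∞) G] :
    ∃ V : Set G, IsOpen V ∧ (1 : G) ∈ V ∧ ∀ H : Subgroup G, (H : Set G) ⊆ V → H = ⊥ := by
  classical
  set I : ModelWithCorners ℝ E E := 𝓘(ℝ, E) with hI
  set ψ : PartialEquiv G E := extChartAt I (1 : G) with hψdef
  set c : E := ψ 1 with hc
  set F : E × E → E := fun p => ψ (ψ.symm p.1 * ψ.symm p.2) with hFdef
  have hψ1 : ψ.symm c = 1 := (extChartAt I (1 : G)).left_inv (mem_extChartAt_source (1 : G))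
  have hF : ContDiffAt ℝ ((⊤ : ℕ∞) : WithTop ℕ∞) F (c, c) := by
    have hmul : ContMDiffAt (I.prod I) I ((⊤ : ℕ∞) : WithTop ℕ∞) (fun p : G × G => p.1 * p.2) (1, 1) :=
      (contMDiff_mul I ((⊤ : ℕ∞) : WithTop ℕ∞)).contMDiffAt
    rw [contMDiffAt_iff] at hmul
    obtain ⟨-, hdiff⟩ := hmul
    rw [ModelWithCorners.Boundaryless.range_eq_univ, contDiffWithinAt_univ] at hdiff
    have he : (extChartAt I ((1 : G) * 1) ∘ (fun p : G × G => p.1 * p.2) ∘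
        (extChartAt (I.prod I) ((1 : G), (1 : G))).symm) = F := by
      funext p
      simp only [extChartAt_prod, PartialEquiv.prod_symm, Function.comp_apply,
        PartialEquiv.prod_coe_symm, mul_one, hFdef]
      rfl
    have hpt : extChartAt (I.prod I) ((1 : G), (1 : G)) (1, 1) = (c, c) := by
      rw [extChartAt_prod]; rfl
    rw [he, hpt] at hdiff
    exact hdiff
  have hL : HasStrictFDerivAt F (fderiv ℝ F (c, c)) (c, c) :=
    hF.hasStrictFDerivAt (by simp)
  set L := fderiv ℝ F (c, c) with hLdef
  have htarget : ψ.target ∈ nhds c := extChartAt_target_mem_nhds (1 : G)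
  have hFxc : ∀ x ∈ ψ.target, F (x, c) = x := by
    intro x hx
    simp only [hFdef, hψ1, mul_one]
    exact ψ.right_inv hx
  have hFcy : ∀ y ∈ ψ.target, F (c, y) = y := by
    intro y hy
    simp only [hFdef, hψ1, one_mul]
    exact ψ.right_inv hy
  have hL1 : ∀ u : E, L (u, 0) = u := by
    intro u
    have hinner : HasFDerivAt (fun x : E => ((x, c) : E × E))
        ((ContinuousLinearMap.id ℝ E).prod 0) c :=
      HasFDerivAt.prodMk (hasFDerivAt_id c) (hasFDerivAt_const c c)
    have h1 : HasFDerivAt (F ∘ fun x : E => ((x, c) : E × E))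
        (L.comp ((ContinuousLinearMap.id ℝ E).prod 0)) c :=
      HasFDerivAt.comp (f := fun x : E => ((x, c) : E × E)) c hL.hasFDerivAt hinner
    have h2 : HasFDerivAt (fun x : E => x)
        (L.comp ((ContinuousLinearMap.id ℝ E).prod 0)) c := by
      refine h1.congr_of_eventuallyEq ?_
      filter_upwards [htarget] with x hx
      exact (hFxc x hx).symm
    have h3 := h2.unique (hasFDerivAt_id c)
    have := congrArg (fun T : E →L[ℝ] E => T u) h3
    simpa using this
  have hL2 : ∀ v : E, L (0, v) = v := by
    intro v
    have hinner : HasFDerivAt (fun y : E => ((c, y) : E × E))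
        ((0 : E →L[ℝ] E).prod (ContinuousLinearMap.id ℝ E)) c :=
      HasFDerivAt.prodMk (hasFDerivAt_const c c) (hasFDerivAt_id c)
    have h1 : HasFDerivAt (F ∘ fun y : E => ((c, y) : E × E))
        (L.comp ((0 : E →L[ℝ] E).prod (ContinuousLinearMap.id ℝ E))) c :=
      HasFDerivAt.comp (f := fun y : E => ((c, y) : E × E)) c hL.hasFDerivAt hinner
    have h2 : HasFDerivAt (fun y : E => y)
        (L.comp ((0 : E →L[ℝ] E).prod (ContinuousLinearMap.id ℝ E))) c := by
      refine h1.congr_of_eventuallyEq ?_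
      filter_upwards [htarget] with y hy
      exact (hFcy y hy).symm
    have h3 := h2.unique (hasFDerivAt_id c)
    have := congrArg (fun T : E →L[ℝ] E => T v) h3
    simpa using this
  have hLadd : ∀ u v : E, L (u, v) = u + v := by
    intro u v
    have : ((u, v) : E × E) = (u, 0) + (0, v) := by simp
    rw [this, map_add, hL1, hL2]
  -- the little-o estimate
  have hlo : ∀ᶠ p : (E × E) × (E × E) in nhds ((c, c), (c, c)),
      ‖F p.1 - F p.2 - L (p.1 - p.2)‖ ≤ 1 / 2 * ‖p.1 - p.2‖ :=
    Asymptotics.isLittleO_iff.mp hL.isLittleO (by norm_num)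
  obtain ⟨ε, hε, hb⟩ := Metric.eventually_nhds_iff.mp hlo
  obtain ⟨r₂, hr₂, hball⟩ := Metric.mem_nhds_iff.mp htarget
  set r : ℝ := min ε r₂ with hrdef
  have hr : 0 < r := lt_min hε hr₂
  have hrε : r ≤ ε := min_le_left _ _
  have hrt : Metric.ball c r ⊆ ψ.target := fun x hx =>
    hball (Metric.ball_subset_ball (min_le_right _ _) hx)
  have hkey : ∀ x y : E, x ∈ Metric.ball c r → y ∈ Metric.ball c r →
      ‖F (x, y) - x - (y - c)‖ ≤ 1 / 2 * ‖y - c‖ := by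
    intro x y hx hy
    have hx' : dist x c < ε := lt_of_lt_of_le (Metric.mem_ball.mp hx) hrε
    have hy' : dist y c < ε := lt_of_lt_of_le (Metric.mem_ball.mp hy) hrε
    have hd : dist (((x, y), (x, c)) : (E × E) × (E × E)) ((c, c), (c, c)) < ε := by
      rw [Prod.dist_eq, Prod.dist_eq, Prod.dist_eq]
      simp only [dist_self]
      exact max_lt (max_lt hx' hy') (max_lt hx' hε)
    have hbd := hb hd
    simp only at hbd
    have hsub : ((x, y) : E × E) - (x, c) = (0, y - c) := by
      simp [Prod.ext_iff]
    rw [hsub, hLadd, zero_add, hFxc x (hrt hx)] at hbd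
    have hnorm : ‖((0 : E), y - c)‖ = ‖y - c‖ := by
      rw [Prod.norm_def]
      simp [norm_nonneg]
    rwa [hnorm] at hbd
  refine ⟨ψ.source ∩ ψ ⁻¹' Metric.ball c r, ?_, ?_, ?_⟩
  · exact (continuousOn_extChartAt (1 : G)).isOpen_inter_preimage
      (isOpen_extChartAt_source (1 : G)) Metric.isOpen_ball
  · exact ⟨mem_extChartAt_source 1, by simp [Metric.mem_ball, hr, hc]⟩
  · intro H hH
    rw [Subgroup.eq_bot_iff_forall]
    intro h hh
    by_contra hne
    have hmem : ∀ n : ℕ, h ^ n ∈ ψ.source ∧ ψ (h ^ n) ∈ Metric.ball c r :=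
      fun n => hH (pow_mem hh n)
    have hhV : h ∈ ψ.source ∧ ψ h ∈ Metric.ball c r := hH hh
    set a : E := ψ h - c with ha
    have ha0 : a ≠ 0 := by
      intro h0
      apply hne
      have h1 : ψ h = ψ 1 := by rw [← hc]; rwa [sub_eq_zero] at h0
      exact ψ.injOn hhV.1 (mem_extChartAt_source 1) h1
    have hkey2 : ∀ n : ℕ, ‖ψ (h ^ n) - c - (n : ℝ) • a‖ ≤ (n : ℝ) * (‖a‖ / 2) := by
      intro n
      induction n with
      | zero => simp [hc]
      | succ n ih =>
        have hstep : F (ψ (h ^ n), ψ h) = ψ (h ^ (n + 1)) := by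
          simp only [hFdef, ψ.left_inv (hmem n).1, ψ.left_inv hhV.1, pow_succ]
        have hest := hkey _ _ (hmem n).2 hhV.2
        rw [hstep] at hest
        have hsplit : ψ (h ^ (n + 1)) - c - ((n + 1 : ℕ) : ℝ) • a
            = (ψ (h ^ (n + 1)) - ψ (h ^ n) - a) + (ψ (h ^ n) - c - (n : ℝ) • a) := by
          push_cast
          rw [add_smul, one_smul]
          abel
        rw [hsplit]
        calc ‖(ψ (h ^ (n + 1)) - ψ (h ^ n) - a) + (ψ (h ^ n) - c - (n : ℝ) • a)‖
            ≤ ‖ψ (h ^ (n + 1)) - ψ (h ^ n) - a‖ + ‖ψ (h ^ n) - c - (n : ℝ) • a‖ :=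
              norm_add_le _ _
          _ ≤ 1 / 2 * ‖a‖ + (n : ℝ) * (‖a‖ / 2) := by
              refine add_le_add ?_ ih
              simpa [ha] using hest
          _ = ((n + 1 : ℕ) : ℝ) * (‖a‖ / 2) := by push_cast; ring
    have hapos : 0 < ‖a‖ := norm_pos_iff.mpr ha0
    have hpos : 0 < ‖a‖ / 2 := by linarith
    obtain ⟨n, hn⟩ := exists_nat_gt (r / (‖a‖ / 2))
    have hlt : ‖ψ (h ^ n) - c‖ < r := by
      have := (hmem n).2
      rwa [Metric.mem_ball, dist_eq_norm] at this
    have hge : (n : ℝ) * (‖a‖ / 2) ≤ ‖ψ (h ^ n) - c‖ := by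
      have h1 : ‖(n : ℝ) • a‖ - ‖(n : ℝ) • a - (ψ (h ^ n) - c)‖ ≤ ‖ψ (h ^ n) - c‖ := by
        have := norm_sub_norm_le ((n : ℝ) • a) (ψ (h ^ n) - c)
        linarith [this]
      have h2 : ‖(n : ℝ) • a - (ψ (h ^ n) - c)‖ ≤ (n : ℝ) * (‖a‖ / 2) := by
        rw [norm_sub_rev]
        exact hkey2 n
      have h3 : ‖(n : ℝ) • a‖ = (n : ℝ) * ‖a‖ := by
        rw [norm_smul, Real.norm_natCast]
      nlinarith
    have : r < (n : ℝ) * (‖a‖ / 2) := by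
      rwa [div_lt_iff₀ hpos] at hn
    linarith

/-- Let `G` be a connected Lie group with center `Z` and `C` the maximal torus of `Z`.
If the group of restrictions to `C` of automorphisms of `G` is infinite, then `Aut(G)`
has infinitely many connected components. -/
theorem infinitely_many_components_of_infinite_restrictions
    {E : Type*} [NormedAddCommGroup E] [NormedSpace ℝ E] [FiniteDimensional ℝ E]
    {G : Type*} [TopologicalSpace G] [ChartedSpace E G] [Group G] [IsTopologicalGroup G]
    [LieGroup 𝓘(ℝ, E) (⊤ : ℕ∞) G] [ConnectedSpace G]
    (C : Subgroup G) (hCcompact : IsCompact (C : Set G)) (hCconn : IsConnected (C : Set G))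
    (hCcentral : C ≤ Subgroup.center G)
    (hCmax : ∀ C' : Subgroup G, IsCompact (C' : Set G) → IsConnected (C' : Set G) →
      C' ≤ Subgroup.center G → C' ≤ C)
    (hinf : Set.Infinite {f : C → C | ∃ α : ContAut G, ∀ t : C, (f t : G) = α.1 t}) :
    Infinite (ConnectedComponents (ContAut G)) := by
  classical
  have hGlc : LocallyCompactSpace G :=
    Manifold.locallyCompact_of_finiteDimensional 𝓘(ℝ, E)
  have hCcs : CompactSpace C := isCompact_iff_compactSpace.mp hCcompact
  -- every continuous automorphism maps C into C
  have hmapsTo : ∀ (α : ContAut G) (t : C), α.1 ↑t ∈ C := by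
    intro α t
    have hcentral' : Subgroup.map α.1.toMonoidHom C ≤ Subgroup.center G := by
      rintro x hx
      rw [Subgroup.mem_map] at hx
      obtain ⟨y, hy, rfl⟩ := hx
      rw [Subgroup.mem_center_iff]
      intro g
      have hy' := Subgroup.mem_center_iff.mp (hCcentral hy)
      have hg : g = α.1 (α.1.symm g) := (α.1.apply_symm_apply g).symm
      rw [hg]
      simp only [MulEquiv.toMonoidHom_eq_coe, MonoidHom.coe_coe]
      rw [← map_mul, ← map_mul, hy' _]
    have hcomp : IsCompact ((Subgroup.map α.1.toMonoidHom C : Subgroup G) : Set G) := by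
      rw [Subgroup.coe_map]
      exact hCcompact.image α.2.1
    have hconn : IsConnected ((Subgroup.map α.1.toMonoidHom C : Subgroup G) : Set G) := by
      rw [Subgroup.coe_map]
      exact hCconn.image _ α.2.1.continuousOn
    exact hCmax _ hcomp hconn hcentral' (Subgroup.mem_map_of_mem _ t.2)
  set ρ : ContAut G → (C → C) := fun α t => ⟨α.1 ↑t, hmapsTo α t⟩ with hρdef
  obtain ⟨V, hVopen, hV1, hVnss⟩ := exists_nss_subgroup (E := E) (G := G)
  -- the "close to α" sets are open
  have hWopen : ∀ α : ContAut G,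
      IsOpen {β : ContAut G | ∀ t : C, β.1 ↑t * (α.1 ↑t)⁻¹ ∈ V} := by
    intro α
    have hind : Continuous (fun α : ContAut G =>
        ((⟨α.1, α.2.1⟩ : C(G, G)), (⟨α.1.symm, α.2.2⟩ : C(G, G)))) :=
      continuous_induced_dom
    have hσ : Continuous (fun β : ContAut G => (⟨β.1, β.2.1⟩ : C(G, G))) := hind.fst
    have hcont : ∀ β : ContAut G, Continuous (fun t : C => β.1 ↑t * (α.1 ↑t)⁻¹) :=
      fun β => ((β.2.1.comp continuous_subtype_val).mul
        ((α.2.1.comp continuous_subtype_val).inv))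
    have hΘ : Continuous (fun β : ContAut G =>
        (⟨fun t : C => β.1 ↑t * (α.1 ↑t)⁻¹, hcont β⟩ : C(C, G))) := by
      apply ContinuousMap.continuous_of_continuous_uncurry
      have h1 : Continuous (fun p : ContAut G × C => (p.1.1 : G → G) ↑p.2) := by
        have h0 : Continuous (fun p : ContAut G × C =>
            ((⟨p.1.1, p.1.2.1⟩ : C(G, G)), (↑p.2 : G))) :=
          (hσ.comp continuous_fst).prodMk (continuous_subtype_val.comp continuous_snd)
        exact continuous_eval.comp h0
      have h2 : Continuous (fun p : ContAut G × C => ((α.1 ↑p.2 : G))⁻¹) :=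
        (α.2.1.comp (continuous_subtype_val.comp continuous_snd)).inv
      exact h1.mul h2
    have heq : {β : ContAut G | ∀ t : C, β.1 ↑t * (α.1 ↑t)⁻¹ ∈ V}
        = (fun β : ContAut G => (⟨fun t : C => β.1 ↑t * (α.1 ↑t)⁻¹, hcont β⟩ : C(C, G))) ⁻¹'
          {ψ : C(C, G) | Set.MapsTo ψ Set.univ V} := by
      ext β
      simp [Set.MapsTo]
    rw [heq]
    exact (ContinuousMap.isOpen_setOf_mapsTo isCompact_univ hVopen).preimage hΘ
  -- if β is V-close to α then ρ β = ρ α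
  have hρconst : ∀ α β : ContAut G, (∀ t : C, β.1 ↑t * (α.1 ↑t)⁻¹ ∈ V) → ρ β = ρ α := by
    intro α β hβ
    have hcomm : ∀ (s t : C), β.1 ↑(s * t) * (α.1 ↑(s * t))⁻¹
        = (β.1 ↑s * (α.1 ↑s)⁻¹) * (β.1 ↑t * (α.1 ↑t)⁻¹) := by
      intro s t
      have hy : β.1 ↑t * (α.1 ↑t)⁻¹ ∈ Subgroup.center G :=
        Subgroup.mul_mem _ (hCcentral (hmapsTo β t))
          (Subgroup.inv_mem _ (hCcentral (hmapsTo α t)))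
      have hy' := Subgroup.mem_center_iff.mp hy
      have hβc := Subgroup.mem_center_iff.mp (hCcentral (hmapsTo β t))
      push_cast [map_mul, mul_inv_rev]
      calc β.1 ↑s * β.1 ↑t * ((α.1 ↑t)⁻¹ * (α.1 ↑s)⁻¹)
          = β.1 ↑s * ((β.1 ↑t * (α.1 ↑t)⁻¹) * (α.1 ↑s)⁻¹) := by
            simp only [mul_assoc]
        _ = β.1 ↑s * ((α.1 ↑s)⁻¹ * (β.1 ↑t * (α.1 ↑t)⁻¹)) := by
            rw [hy' ((α.1 ↑s)⁻¹)]
        _ = (β.1 ↑s * (α.1 ↑s)⁻¹) * (β.1 ↑t * (α.1 ↑t)⁻¹) := by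
            simp only [mul_assoc]
    set δ : C →* G :=
      { toFun := fun t => β.1 ↑t * (α.1 ↑t)⁻¹
        map_one' := by simp
        map_mul' := hcomm } with hδdef
    have hrange : ((δ.range : Subgroup G) : Set G) ⊆ V := by
      rintro x ⟨t, rfl⟩
      exact hβ t
    have hbot := hVnss _ hrange
    have hδ1 : ∀ t : C, δ t = 1 := by
      intro t
      have : δ t ∈ δ.range := ⟨t, rfl⟩
      rw [hbot, Subgroup.mem_bot] at this
      exact this
    funext t
    apply Subtype.ext
    have := hδ1 t
    simp only [hδdef, MonoidHom.coe_mk, OneHom.coe_mk] at this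
    have heq : β.1 ↑t = α.1 ↑t := by
      rwa [mul_inv_eq_one] at this
    exact heq
  -- ρ is locally constant
  have hlc : IsLocallyConstant ρ := by
    rw [IsLocallyConstant.iff_isOpen_fiber]
    intro f
    rw [isOpen_iff_forall_mem_open]
    intro α hα
    refine ⟨{β : ContAut G | ∀ t : C, β.1 ↑t * (α.1 ↑t)⁻¹ ∈ V}, ?_, hWopen α, ?_⟩
    · intro β hβ
      simp only [Set.mem_preimage, Set.mem_singleton_iff] at hα ⊢
      rw [hρconst α β hβ]
      exact hα
    · intro t
      simpa using hV1
  -- conclude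
  have hSinf : Infinite ↥{f : C → C | ∃ α : ContAut G, ∀ t : C, (f t : G) = α.1 t} :=
    hinf.to_subtype
  refine Infinite.of_injective
    (fun f : ↥{f : C → C | ∃ α : ContAut G, ∀ t : C, (f t : G) = α.1 t} =>
      (f.2.choose : ConnectedComponents (ContAut G))) ?_
  intro f g hfg
  have hf := f.2.choose_spec
  have hg := g.2.choose_spec
  have hcc : connectedComponent (f.2.choose) = connectedComponent (g.2.choose) :=
    ConnectedComponents.coe_eq_coe.mp hfg
  have hmem : g.2.choose ∈ connectedComponent (f.2.choose) := by
    rw [hcc]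
    exact mem_connectedComponent
  have hρeq : ρ f.2.choose = ρ g.2.choose :=
    hlc.apply_eq_of_isPreconnected isPreconnected_connectedComponent
      mem_connectedComponent hmem
  apply Subtype.ext
  funext t
  apply Subtype.ext
  calc (f.1 t : G) = f.2.choose.1 ↑t := hf t
    _ = ((ρ f.2.choose t : C) : G) := rfl
    _ = ((ρ g.2.choose t : C) : G) := by rw [hρeq]
    _ = g.2.choose.1 ↑t := rfl
    _ = (g.1 t : G) := (hg t).symm
end
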